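/- Let 𝒜 be a skeletally small abelian category, X an object of 𝒜, and Δ and Γ subobject chains of X. Then both the lower conflation con⁻(Δ,Γ) and the upper conflation con⁺(Δ,Γ) are subobject chains of X which are refinements of Δ. -/

import Mathlib

open CategoryTheory CategoryTheory.Limits

universe w v u

namespace JHS

variable {𝒜 : Type u} [Category.{v} 𝒜] [Abelian 𝒜]

variable {X : 𝒜}

/-- The diagram in `𝒜` associated to a set of subobjects of `X`, given by the underlying
objects and the canonical inclusion monomorphisms between them. -/
@[simps]
noncomputable def chainDiagram (Δ : Set (Subobject X)) : Δ ⥤ 𝒜 where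
  obj Y := (Y.1 : 𝒜)
  map {Y Z} f := Subobject.ofLE Y.1 Z.1 (leOfHom f)
  map_id Y := Subobject.ofLE_refl Y.1
  map_comp {Y Z W} f g := (Subobject.ofLE_comp_ofLE Y.1 Z.1 W.1 (leOfHom f) (leOfHom g)).symm

/-- The cocone over the diagram of a set of subobjects of `X` with vertex an upper bound. -/
@[simps]
noncomputable def chainCocone (Δ : Set (Subobject X)) (W : Subobject X) (h : ∀ Y ∈ Δ, Y ≤ W) :
    Cocone (chainDiagram Δ) where
  pt := (W : 𝒜)
  ι :=
    { app := fun Y => Subobject.ofLE Y.1 W (h Y.1 Y.2)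
      naturality := fun Y Z f => by
        simp [chainDiagram, Subobject.ofLE_comp_ofLE] }

/-- The cone over the diagram of a set of subobjects of `X` with vertex a lower bound. -/
@[simps]
noncomputable def chainCone (Δ : Set (Subobject X)) (W : Subobject X) (h : ∀ Y ∈ Δ, W ≤ Y) :
    Cone (chainDiagram Δ) where
  pt := (W : 𝒜)
  π :=
    { app := fun Y => Subobject.ofLE W Y.1 (h Y.1 Y.2)
      naturality := fun Y Z f => by
        simp [chainDiagram, Subobject.ofLE_comp_ofLE] }

/-- `W` is the colimit of the chain `Δ` of subobjects of `X`, as a subobject of `X`: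
the colimit of the diagram of inclusions exists and the induced morphism to `X` is a
monomorphism with image `W`.  Equivalently, the canonical cocone with vertex `W` is a
colimit cocone. -/
def IsColimSub (Δ : Set (Subobject X)) (W : Subobject X) : Prop :=
  ∃ h : ∀ Y ∈ Δ, Y ≤ W, Nonempty (IsColimit (chainCocone Δ W h))

/-- `W` is the limit of the chain `Δ` of subobjects of `X` (such a limit is automatically a
subobject of `X`): the canonical cone with vertex `W` is a limit cone. -/
def IsLimSub (Δ : Set (Subobject X)) (W : Subobject X) : Prop :=
  ∃ h : ∀ Y ∈ Δ, W ≤ Y, Nonempty (IsLimit (chainCone Δ W h))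

/-- A pre-subobject chain: a set of subobjects totally ordered under inclusion. -/
def IsPreChain (Δ : Set (Subobject X)) : Prop :=
  IsChain (· ≤ ·) Δ

/-- A subobject chain: a pre-subobject chain containing `⊥ = 0` and `⊤ = X`. -/
def IsSubChain (Δ : Set (Subobject X)) : Prop :=
  IsPreChain Δ ∧ ⊥ ∈ Δ ∧ ⊤ ∈ Δ

/-- A chain is cocomplete if every subset has a colimit which is a subobject of `X` and
lies in the chain. -/
def Cocomplete (Δ : Set (Subobject X)) : Prop :=
  ∀ Δ' ⊆ Δ, ∃ W ∈ Δ, IsColimSub Δ' W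

/-- A chain is complete if every subset has a limit which lies in the chain. -/
def Complete (Δ : Set (Subobject X)) : Prop :=
  ∀ Δ' ⊆ Δ, ∃ W ∈ Δ, IsLimSub Δ' W

/-- A chain is bicomplete if it is both cocomplete and complete. -/
def Bicomplete (Δ : Set (Subobject X)) : Prop :=
  Cocomplete Δ ∧ Complete Δ

/-- `W = Y⁻_Δ` is the predecessor of `Y` in `Δ`: the colimit of `{Z ∈ Δ | Z ⊊ Y}`,
with the convention `0⁻_Δ = 0`. -/
def IsPred (Δ : Set (Subobject X)) (Y W : Subobject X) : Prop :=
  (Y = ⊥ ∧ W = ⊥) ∨ (Y ≠ ⊥ ∧ IsColimSub {Z | Z ∈ Δ ∧ Z < Y} W)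

/-- `W = Y⁺_Δ` is the successor of `Y` in `Δ`: the limit of `{Z ∈ Δ | Y ⊊ Z}`,
with the convention `X⁺_Δ = X`. -/
def IsSucc (Δ : Set (Subobject X)) (Y W : Subobject X) : Prop :=
  (Y = ⊤ ∧ W = ⊤) ∨ (Y ≠ ⊤ ∧ IsLimSub {Z | Z ∈ Δ ∧ Y < Z} W)

/-- The quotient (subfactor) `Y/W` of two nested subobjects of `X`: the cokernel of the
inclusion `W → Y`. -/
noncomputable def quot (W Y : Subobject X) (h : W ≤ Y) : 𝒜 :=
  cokernel (Subobject.ofLE W Y h)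

/-- A composition series of `X`: a bicomplete subobject chain all of whose subfactors
`Y/Y⁻_Δ` (for `Y ∈ Δ` with `Y ≠ Y⁻_Δ`) are simple. -/
def IsCompSeries (Δ : Set (Subobject X)) : Prop :=
  IsSubChain Δ ∧ Bicomplete Δ ∧
    ∀ Y ∈ Δ, ∀ (W) (h : W ≤ Y), IsPred Δ Y W → W ≠ Y → Simple (quot W Y h)

variable (X) in
/-- Axiom (JHS1): `X` is subobject cocomplete. -/
def JHS1 : Prop :=
  ∀ Δ : Set (Subobject X), IsPreChain Δ → ∃ W, IsColimSub Δ W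

variable (X) in
/-- Axiom (JHS2): `X` is subobject complete. -/
def JHS2 : Prop :=
  ∀ Δ : Set (Subobject X), IsPreChain Δ → ∃ W, IsLimSub Δ W

variable (X) in
/-- Axiom (JHS3). -/
def JHS3 : Prop :=
  JHS1 X ∧ ∀ (Δ : Set (Subobject X)) (Z W : Subobject X),
    IsPreChain Δ → IsColimSub Δ W → IsColimSub ((· ⊓ Z) '' Δ) (W ⊓ Z)

variable (X) in
/-- Axiom (JHS4). -/
def JHS4 : Prop :=
  JHS2 X ∧ ∀ (Δ : Set (Subobject X)) (Z W : Subobject X),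
    IsPreChain Δ → IsLimSub Δ W → IsLimSub ((· ⊔ Z) '' Δ) (W ⊔ Z)

variable (X) in
/-- `X` is weakly Jordan–Hölder–Schreier. -/
def WeaklyJHS : Prop :=
  JHS3 X ∧ JHS4 X

variable (X) in
/-- Axiom (JHS5): if `X ≠ 0`, every composition series of `X` has a nonempty subfactor
multiset. -/
def JHS5 : Prop :=
  ¬ IsZero X → ∀ Δ : Set (Subobject X), IsCompSeries Δ →
    ∃ Y ∈ Δ, ∃ W, IsPred Δ Y W ∧ W ≠ Y

variable (X) in
/-- `X` is Jordan–Hölder–Schreier. -/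
def IsJHS : Prop :=
  WeaklyJHS X ∧ JHS5 X

/-- The index set of the lower subfactor multiset `sf⁻(Δ)`: elements `Y ∈ Δ` admitting a
predecessor `Y⁻_Δ ≠ Y`. -/
def lowerIdx (Δ : Set (Subobject X)) : Type _ :=
  {Y : Subobject X // Y ∈ Δ ∧ ∃ W, IsPred Δ Y W ∧ W ≠ Y}

/-- The index set of the upper subfactor multiset `sf⁺(Δ)`: elements `Y ∈ Δ` admitting a
successor `Y⁺_Δ ≠ Y`. -/
def upperIdx (Δ : Set (Subobject X)) : Type _ :=
  {Y : Subobject X // Y ∈ Δ ∧ ∃ W, IsSucc Δ Y W ∧ W ≠ Y}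

/-- Subfactor equivalence of two chains: a bijection of the index sets of their subfactor
multisets under which corresponding subfactors are isomorphic. -/
def SubfactorEquiv (Δ Γ : Set (Subobject X)) : Prop :=
  ∃ e : lowerIdx Δ ≃ lowerIdx Γ,
    ∀ (Y : lowerIdx Δ) (W : Subobject X) (hW : W ≤ Y.1) (V : Subobject X)
      (hV : V ≤ (e Y).1),
      IsPred Δ Y.1 W → IsPred Γ (e Y).1 V →
      Nonempty (quot W Y.1 hW ≅ quot V (e Y).1 hV)

/-- The lower conflation `con⁻(Δ, Γ)`. -/
def conLower (Δ Γ : Set (Subobject X)) : Set (Subobject X) :=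
  Δ ∪ {V | ∃ Y ∈ Δ, ∃ Z ∈ Γ, ∃ W, IsPred Δ Y W ∧ V = W ⊔ (Y ⊓ Z)}

/-- The upper conflation `con⁺(Δ, Γ)`. -/
def conUpper (Δ Γ : Set (Subobject X)) : Set (Subobject X) :=
  Δ ∪ {V | ∃ Y ∈ Δ, ∃ Z ∈ Γ, ∃ W, IsSucc Δ Y W ∧ V = Y ⊔ (W ⊓ Z)}

/-!
Only the order-theoretic shadow of the (co)limits matters: `Y⁻_Δ` is the least upper bound of
the members of `Δ` strictly below `Y`, and `Y⁺_Δ` the greatest lower bound of those strictly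
above it. Every member of `Δ` lies below `Y⁻_Δ` or above `Y`, so the points `Y⁻_Δ + (Y ∩ Z)`
inserted into the gap `[Y⁻_Δ, Y]` are comparable with all of `Δ`; gaps of distinct `Y` are
ordered like their `Y`, and inside one gap the inserted points are monotone in `Z ∈ Γ`.
The upper conflation is the same picture with the gaps `[Y, Y⁺_Δ]`.
-/

section Lattice

variable {α : Type*} [Lattice α] {Δ Γ : Set α}

lemma le_or_le_of_isLUB_lt {A Y W : α} (hΔ : IsChain (· ≤ ·) Δ) (hA : A ∈ Δ) (hY : Y ∈ Δ)
    (hW : IsLUB {B | B ∈ Δ ∧ B < Y} W) : A ≤ W ∨ Y ≤ A := by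
  rcases hΔ.total hA hY with hAY | hYA
  · rcases hAY.lt_or_eq with hlt | rfl
    · exact Or.inl (hW.1 ⟨hA, hlt⟩)
    · exact Or.inr le_rfl
  · exact Or.inr hYA

/- `g` is left abstract so that the upper conflation, which is not the order dual of the lower
one (that would insert `Y⁺ ⊓ (Y ⊔ Z)`), still follows by duality. -/
theorem isChain_union_of_isLUB_lt (hΔ : IsChain (· ≤ ·) Δ) (hΓ : IsChain (· ≤ ·) Γ)
    {g : α → α → α → α} (hg : ∀ {W Y}, W ≤ Y → ∀ Z, W ≤ g W Y Z ∧ g W Y Z ≤ Y)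
    (hg_mono : ∀ W Y, Monotone (g W Y)) :
    IsChain (· ≤ ·)
      (Δ ∪ {V | ∃ Y ∈ Δ, ∃ Z ∈ Γ, ∃ W, IsLUB {B | B ∈ Δ ∧ B < Y} W ∧ V = g W Y Z}) := by
  have hWY {Y W : α} (hW : IsLUB {B | B ∈ Δ ∧ B < Y} W) : W ≤ Y := hW.2 fun _ hB => hB.2.le
  have lt_gap {Y Y' W W' : α} (Z Z' : α) (hY : Y ∈ Δ) (hW : IsLUB {B | B ∈ Δ ∧ B < Y} W)
      (hW' : IsLUB {B | B ∈ Δ ∧ B < Y'} W') (hlt : Y < Y') : g W Y Z ≤ g W' Y' Z' :=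
    (hg (hWY hW) Z).2.trans ((hW'.1 ⟨hY, hlt⟩).trans (hg (hWY hW') Z').1)
  refine isChain_union.2 ⟨hΔ, ?_, ?_⟩
  · rintro _ ⟨Y, hY, Z, hZ, W, hW, rfl⟩ _ ⟨Y', hY', Z', hZ', W', hW', rfl⟩ -
    rcases eq_or_ne Y Y' with rfl | hne
    · obtain rfl := hW.unique hW'
      exact (hΓ.total hZ hZ').imp (fun h => hg_mono W Y h) (fun h => hg_mono W Y h)
    · rcases hΔ.total hY hY' with h | h
      · exact Or.inl (lt_gap Z Z' hY hW hW' (h.lt_of_ne hne))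
      · exact Or.inr (lt_gap Z' Z hY' hW' hW (h.lt_of_ne hne.symm))
  · rintro A hA _ ⟨Y, hY, Z, hZ, W, hW, rfl⟩ -
    rcases le_or_le_of_isLUB_lt hΔ hA hY hW with h | h
    · exact Or.inl (h.trans (hg (hWY hW) Z).1)
    · exact Or.inr ((hg (hWY hW) Z).2.trans h)

theorem isChain_union_of_isGLB_gt (hΔ : IsChain (· ≤ ·) Δ) (hΓ : IsChain (· ≤ ·) Γ)
    {g : α → α → α → α} (hg : ∀ {W Y}, Y ≤ W → ∀ Z, Y ≤ g W Y Z ∧ g W Y Z ≤ W)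
    (hg_mono : ∀ W Y, Monotone (g W Y)) :
    IsChain (· ≤ ·)
      (Δ ∪ {V | ∃ Y ∈ Δ, ∃ Z ∈ Γ, ∃ W, IsGLB {B | B ∈ Δ ∧ Y < B} W ∧ V = g W Y Z}) :=
  (isChain_union_of_isLUB_lt (α := αᵒᵈ) hΔ.symm hΓ.symm (fun h Z => (hg h Z).symm)
    fun W Y => (hg_mono W Y).dual).symm

end Lattice

omit [Abelian 𝒜] in
lemma IsColimSub.isLUB {S : Set (Subobject X)} {W : Subobject X} (h : IsColimSub S W) :
    IsLUB S W := by
  obtain ⟨hW, ⟨hc⟩⟩ := h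
  refine ⟨hW, fun V (hV : ∀ Y ∈ S, Y ≤ V) => ?_⟩
  let f : (W : 𝒜) ⟶ V := hc.desc (chainCocone S V hV)
  refine Subobject.le_of_comm f (hc.hom_ext fun ⟨Y, hY⟩ => ?_)
  have hfac : Subobject.ofLE Y W (hW Y hY) ≫ f = Subobject.ofLE Y V (hV Y hY) :=
    hc.fac (chainCocone S V hV) ⟨Y, hY⟩
  change Subobject.ofLE Y W (hW Y hY) ≫ f ≫ V.arrow = Subobject.ofLE Y W (hW Y hY) ≫ W.arrow
  rw [← Category.assoc, hfac, Subobject.ofLE_arrow, Subobject.ofLE_arrow]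

omit [Abelian 𝒜] in
lemma IsLimSub.isGLB {S : Set (Subobject X)} {W : Subobject X} (h : IsLimSub S W)
    (hS : S.Nonempty) : IsGLB S W := by
  obtain ⟨hW, ⟨hc⟩⟩ := h
  obtain ⟨Y, hY⟩ := hS
  refine ⟨hW, fun V (hV : ∀ Y ∈ S, V ≤ Y) => ?_⟩
  let f : (V : 𝒜) ⟶ W := hc.lift (chainCone S V hV)
  have hfac : f ≫ Subobject.ofLE W Y (hW Y hY) = Subobject.ofLE V Y (hV Y hY) :=
    hc.fac (chainCone S V hV) ⟨Y, hY⟩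
  refine Subobject.le_of_comm f ?_
  rw [← Subobject.ofLE_arrow (hW Y hY), ← Category.assoc, hfac, Subobject.ofLE_arrow]

lemma IsPred.isLUB {Δ : Set (Subobject X)} {Y W : Subobject X} (h : IsPred Δ Y W) :
    IsLUB {Z | Z ∈ Δ ∧ Z < Y} W := by
  rcases h with ⟨rfl, rfl⟩ | ⟨-, hW⟩
  · simpa only [not_lt_bot, and_false, Set.ofPred_false] using isLUB_empty
  · exact hW.isLUB

omit [Abelian 𝒜] in
lemma IsSucc.isGLB {Δ : Set (Subobject X)} {Y W : Subobject X} (htop : ⊤ ∈ Δ)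
    (h : IsSucc Δ Y W) : IsGLB {Z | Z ∈ Δ ∧ Y < Z} W := by
  rcases h with ⟨rfl, rfl⟩ | ⟨hY, hW⟩
  · simpa only [not_top_lt, and_false, Set.ofPred_false] using isGLB_empty
  · exact hW.isGLB ⟨⊤, htop, hY.lt_top⟩

lemma isPreChain_conLower {Δ Γ : Set (Subobject X)} (hΔ : IsPreChain Δ) (hΓ : IsPreChain Γ) :
    IsPreChain (conLower Δ Γ) :=
  (isChain_union_of_isLUB_lt (g := fun W Y Z => W ⊔ (Y ⊓ Z)) hΔ hΓ
      (fun hWY _ => ⟨le_sup_left, sup_le hWY inf_le_left⟩)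
      (fun _ _ _ _ h => sup_le_sup_left (inf_le_inf_left _ h) _)).mono
    (Set.union_subset_union_right Δ <| by
      rintro _ ⟨Y, hY, Z, hZ, W, hW, rfl⟩
      exact ⟨Y, hY, Z, hZ, W, hW.isLUB, rfl⟩)

lemma isPreChain_conUpper {Δ Γ : Set (Subobject X)} (hΔ : IsPreChain Δ) (htop : ⊤ ∈ Δ)
    (hΓ : IsPreChain Γ) : IsPreChain (conUpper Δ Γ) :=
  (isChain_union_of_isGLB_gt (g := fun W Y Z => Y ⊔ (W ⊓ Z)) hΔ hΓ
      (fun hYW _ => ⟨le_sup_left, sup_le hYW inf_le_left⟩)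
      (fun _ _ _ _ h => sup_le_sup_left (inf_le_inf_left _ h) _)).mono
    (Set.union_subset_union_right Δ <| by
      rintro _ ⟨Y, hY, Z, hZ, W, hW, rfl⟩
      exact ⟨Y, hY, Z, hZ, W, hW.isGLB htop, rfl⟩)

lemma IsSubChain.of_superset {Δ Δ' : Set (Subobject X)} (hΔ : IsSubChain Δ) (hsub : Δ ⊆ Δ')
    (hΔ' : IsPreChain Δ') : IsSubChain Δ' :=
  ⟨hΔ', hsub hΔ.2.1, hsub hΔ.2.2⟩

theorem statement11_general (X : 𝒜) (Δ Γ : Set (Subobject X))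
    (hΔ : IsSubChain Δ) (hΓ : IsSubChain Γ) :
    (IsSubChain (conLower Δ Γ) ∧ Δ ⊆ conLower Δ Γ) ∧
    (IsSubChain (conUpper Δ Γ) ∧ Δ ⊆ conUpper Δ Γ) := by
  have hLower : Δ ⊆ conLower Δ Γ := Set.subset_union_left
  have hUpper : Δ ⊆ conUpper Δ Γ := Set.subset_union_left
  exact ⟨⟨hΔ.of_superset hLower (isPreChain_conLower hΔ.1 hΓ.1), hLower⟩,
    ⟨hΔ.of_superset hUpper (isPreChain_conUpper hΔ.1 hΔ.2.2 hΓ.1), hUpper⟩⟩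

/-- Proposition 4.10: conflations of subobject chains are subobject chains refining the
first chain. -/
theorem statement11 [EssentiallySmall.{w} 𝒜] (X : 𝒜) (Δ Γ : Set (Subobject X))
    (hΔ : IsSubChain Δ) (hΓ : IsSubChain Γ) :
    (IsSubChain (conLower Δ Γ) ∧ Δ ⊆ conLower Δ Γ) ∧
    (IsSubChain (conUpper Δ Γ) ∧ Δ ⊆ conUpper Δ Γ) :=
  statement11_general X Δ Γ hΔ hΓ

end JHS
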